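/- Let n ≥ 2 and let P ⊆ ℝ^n be a full-dimensional lattice polytope. Suppose k is an integer with 1 ≤ k ≤ n − 1 such that the dilate kP contains no lattice point in its interior. Then the dilate (n − k)P is normal: for every integer m ≥ 1, every lattice point of m(n−k)P is a sum of m lattice points of (n−k)P. (The combinatorial content of the remark 'in particular (m+1)D is very ample and normally generated' in Corollary 4.4 of the paper, where m = n − 1 − d(P).) -/

import Mathlib

open Pointwise

/-- The set of lattice points of `ℝ^n`, i.e. points with all coordinates integral. -/
def latticePts (n : ℕ) : Set (Fin n → ℝ) := {x | ∀ i, ∃ z : ℤ, x i = (z : ℝ)}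

/-! By Carathéodory, a lattice point `x` of `m(n - k)P` is `∑ λᵢ vᵢ` with `λᵢ ≥ 0`,
`∑ λᵢ = m(n - k)`, over the vertices `vᵢ` of a full-dimensional lattice simplex `Δ ⊆ P`.
Write `λᵢ = ⌊λᵢ⌋ + rᵢ`. Then `z = ∑ rᵢ vᵢ` is a lattice point of `sΔ` with `s = ∑ rᵢ ∈ ℕ`.
If `s + k ≥ n + 1`, the lattice point `∑ (1 - rᵢ) vᵢ + (s + k - n - 1) v₀` has positive
barycentric weights summing to `k`, so it lies in the interior of `kΔ ⊆ kP`; hence `s ≤ n - k`.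
Now `z` and the `⌊λᵢ⌋` copies of each `vᵢ` can be distributed greedily into `m` groups of
total weight `n - k`. -/

open Set

def latticeAddSubgroup (n : ℕ) : AddSubgroup (Fin n → ℝ) where
  carrier := latticePts n
  add_mem' {x y} hx hy i := by
    obtain ⟨a, ha⟩ := hx i
    obtain ⟨b, hb⟩ := hy i
    exact ⟨a + b, by simp [ha, hb]⟩
  zero_mem' _ := ⟨0, by simp⟩
  neg_mem' {x} hx i := by
    obtain ⟨a, ha⟩ := hx i
    exact ⟨-a, by simp [ha]⟩

theorem AddSubgroup.sum_natCast_smul_mem {R E ι : Type*} [Semiring R] [AddCommGroup E]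
    [Module R E] [Fintype ι] (L : AddSubgroup E) {v : ι → E} (hvL : ∀ i, v i ∈ L) (a : ι → ℕ) :
    ∑ i, (a i : R) • v i ∈ L :=
  L.sum_mem fun i _ => (Nat.cast_smul_eq_nsmul R (a i) (v i)).symm ▸ L.nsmul_mem (hvL i) _

theorem exists_le_sum_eq_of_le_sum {ι : Type*} [Fintype ι] {w : ι → ℕ} {c : ℕ} (h : c ≤ ∑ i, w i) :
    ∃ a : ι → ℕ, a ≤ w ∧ ∑ i, a i = c := by
  classical
  induction c with
  | zero => exact ⟨0, fun i => Nat.zero_le _, by simp⟩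
  | succ c ih =>
    obtain ⟨a, haw, ha⟩ := ih (by omega)
    obtain ⟨i, hi⟩ : ∃ i, a i < w i := by
      by_contra! hwa
      have := Finset.sum_le_sum fun i (_ : i ∈ Finset.univ) => hwa i
      omega
    refine ⟨a + Pi.single i 1, fun j => ?_, by simp [Finset.sum_add_distrib, ha]⟩
    rcases eq_or_ne j i with rfl | hj
    · simpa using hi
    · simpa [hj] using haw j

section AffineSpace

variable {k V P : Type*} [DivisionRing k] [AddCommGroup V] [Module k V] [AddTorsor V P]

theorem exists_between_affineIndependent_affineSpan_eq_top {s A : Set P}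
    (hA : affineSpan k A = ⊤) (hsA : s ⊆ A) (hs : s.Nonempty)
    (h : AffineIndependent k ((↑) : s → P)) :
    ∃ t : Set P, s ⊆ t ∧ t ⊆ A ∧ AffineIndependent k ((↑) : t → P) ∧
      affineSpan k t = ⊤ := by
  obtain ⟨p, hp⟩ := hs
  rw [affineIndependent_set_iff_linearIndependent_vsub k hp] at h
  obtain ⟨b, hbA, hsb, hAb, hb⟩ := exists_linearIndepOn_id_extension h
    (image_mono (sdiff_subset_sdiff_left hsA))
  have hb0 : ∀ v ∈ b, v ≠ 0 := fun v hv => hb.ne_zero hv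
  have hspan : Submodule.span k b = ⊤ := by
    rw [eq_top_iff, ← AffineSubspace.direction_top k V P, ← hA, direction_affineSpan,
      vectorSpan_eq_span_vsub_set_right_ne k (hsA hp)]
    exact Submodule.span_le.mpr hAb
  refine ⟨{p} ∪ (· +ᵥ p) '' b, ?_, ?_, ?_, ?_⟩
  · intro q hq
    by_cases hqp : q = p
    · exact Or.inl hqp
    · exact Or.inr ⟨q -ᵥ p, hsb ⟨q, ⟨hq, hqp⟩, rfl⟩, vsub_vadd q p⟩
  · rintro q (rfl | ⟨v, hv, rfl⟩)
    · exact hsA hp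
    · obtain ⟨q, hq, rfl⟩ := hbA hv
      simpa using hq.1
  · exact (linearIndependent_set_iff_affineIndependent_vadd_union_singleton k hb0 p).mp hb
  · exact affineSpan_singleton_union_vadd_eq_top_of_span_eq_top p (by rwa [Subtype.range_coe])

end AffineSpace

section Convex

variable {𝕜 E ι : Type*} [Field 𝕜] [LinearOrder 𝕜] [IsStrictOrderedRing 𝕜] [AddCommGroup E]
  [Module 𝕜 E]

theorem exists_affineIndependent_affineSpan_eq_top_mem_convexHull {s : Set E}
    (hs : affineSpan 𝕜 s = ⊤) {y : E} (hy : y ∈ convexHull 𝕜 s) :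
    ∃ t ⊆ s, AffineIndependent 𝕜 ((↑) : t → E) ∧ affineSpan 𝕜 t = ⊤ ∧ y ∈ convexHull 𝕜 t := by
  rw [convexHull_eq_union] at hy
  simp only [mem_iUnion] at hy
  obtain ⟨u, hus, hu, hyu⟩ := hy
  obtain ⟨t, hut, hts, ht, htop⟩ := exists_between_affineIndependent_affineSpan_eq_top hs hus
    (convexHull_nonempty_iff.mp ⟨y, hyu⟩) hu
  exact ⟨t, hts, ht, htop, convexHull_mono hut hyu⟩

theorem Convex.sum_smul_mem_sum_smul {s : Set E} (hs : Convex 𝕜 s) (hne : s.Nonempty)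
    (t : Finset ι) {w : ι → 𝕜} (hw : ∀ i ∈ t, 0 ≤ w i) {v : ι → E} (hv : ∀ i ∈ t, v i ∈ s) :
    ∑ i ∈ t, w i • v i ∈ (∑ i ∈ t, w i) • s := by
  classical
  induction t using Finset.induction_on with
  | empty => simp [zero_smul_set hne]
  | insert j t hj ih =>
    simp only [Finset.mem_insert, forall_eq_or_imp] at hw hv
    rw [Finset.sum_insert hj, Finset.sum_insert hj, hs.add_smul hw.1 (Finset.sum_nonneg hw.2)]
    exact add_mem_add (smul_mem_smul_set hv.1) (ih hw.2 hv.2)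

theorem exists_fin_sum_eq_add_sum_natCast_smul [Fintype ι] [Nonempty ι] (L : AddSubgroup E)
    {v : ι → E} (hvL : ∀ i, v i ∈ L) {c s : ℕ} (hsc : s ≤ c) {z : E}
    (hz : z ∈ (s : 𝕜) • convexHull 𝕜 (range v)) (hzL : z ∈ L) (m : ℕ) (W : ι → ℕ)
    (hW : s + ∑ i, W i = (m + 1) * c) :
    ∃ f : Fin (m + 1) → E, (∀ j, f j ∈ (c : 𝕜) • convexHull 𝕜 (range v) ∧ f j ∈ L) ∧
      z + ∑ i, (W i : 𝕜) • v i = ∑ j, f j := by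
  have hconv := convex_convexHull 𝕜 (range v)
  have hne : (convexHull 𝕜 (range v)).Nonempty := (range_nonempty v).convexHull
  have hsum_mem : ∀ a : ι → ℕ,
      ∑ i, (a i : 𝕜) • v i ∈ ((∑ i, a i : ℕ) : 𝕜) • convexHull 𝕜 (range v) ∧
        ∑ i, (a i : 𝕜) • v i ∈ L := fun a => by
    refine ⟨?_, L.sum_natCast_smul_mem hvL a⟩
    rw [Nat.cast_sum]
    exact hconv.sum_smul_mem_sum_smul hne _ (fun i _ => Nat.cast_nonneg _)
      (fun i _ => subset_convexHull 𝕜 _ (mem_range_self i))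
  induction m generalizing W with
  | zero =>
    refine ⟨fun _ => z + ∑ i, (W i : 𝕜) • v i,
      fun _ => ⟨?_, L.add_mem hzL (hsum_mem W).2⟩, by simp⟩
    have := add_mem_add hz (hsum_mem W).1
    rwa [← hconv.add_smul (Nat.cast_nonneg _) (Nat.cast_nonneg _), ← Nat.cast_add, hW,
      zero_add, one_mul] at this
  | succ m ih =>
    obtain ⟨a, haW, ha⟩ := exists_le_sum_eq_of_le_sum (w := W) (c := c) (by nlinarith)
    have hWa : s + ∑ i, (W - a) i = (m + 1) * c := by
      have := Finset.sum_le_sum fun i (_ : i ∈ Finset.univ) => haW i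
      rw [Pi.sub_def, Finset.sum_tsub_distrib _ fun i _ => haW i]
      rw [add_mul, one_mul] at hW
      omega
    obtain ⟨g, hg, hsum⟩ := ih (W - a) hWa
    refine ⟨Fin.cons (∑ i, (a i : 𝕜) • v i) g, fun j => ?_, ?_⟩
    · refine Fin.cases ?_ (fun j => ?_) j
      · simpa [ha] using hsum_mem a
      · simpa using hg j
    · have hcast : ∀ i, (((W - a) i : ℕ) : 𝕜) = W i - a i := fun i => Nat.cast_sub (haW i)
      simp only [Fin.sum_cons, ← hsum, hcast, sub_smul, Finset.sum_sub_distrib]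
      abel

theorem AffineBasis.exists_nonneg_weights_of_mem_smul_convexHull [Fintype ι]
    (b : AffineBasis ι 𝕜 E) {t : 𝕜} (ht : 0 ≤ t) {x : E} (hx : x ∈ t • convexHull 𝕜 (range b)) :
    ∃ w : ι → 𝕜, (∀ i, 0 ≤ w i) ∧ ∑ i, w i = t ∧ x = ∑ i, w i • b i := by
  obtain ⟨y, hy, rfl⟩ := hx
  rw [b.convexHull_eq_nonneg_coord] at hy
  refine ⟨fun i => t * b.coord i y, fun i => mul_nonneg ht (hy i), ?_, ?_⟩
  · rw [← Finset.mul_sum, b.sum_coord_apply_eq_one, mul_one]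
  · conv_lhs => rw [← b.linear_combination_coord_eq_self y]
    simp only [Finset.smul_sum, smul_smul]

end Convex

section Simplex

variable {V ι : Type*} [NormedAddCommGroup V] [NormedSpace ℝ V] [Fintype ι]
  (b : AffineBasis ι ℝ V) (L : AddSubgroup V)

namespace AffineBasis

theorem sum_smul_mem_interior_smul_convexHull {w : ι → ℝ} (hw : ∀ i, 0 < w i) :
    ∑ i, w i • b i ∈ interior ((∑ i, w i) • convexHull ℝ (range b)) := by
  have hι : Nonempty ι := b.nonempty
  have ht : 0 < ∑ i, w i := Finset.sum_pos (fun i _ => hw i) Finset.univ_nonempty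
  rw [interior_smul₀ ht.ne', b.interior_convexHull]
  refine ⟨∑ i, ((∑ j, w j)⁻¹ * w i) • b i, fun i => ?_, ?_⟩
  · have hw1 : ∑ i, (∑ j, w j)⁻¹ * w i = 1 := by
      rw [← Finset.mul_sum, inv_mul_cancel₀ ht.ne']
    rw [← Finset.univ.affineCombination_eq_linear_combination _ _ hw1,
      b.coord_apply_combination_of_mem (Finset.mem_univ i) hw1]
    exact mul_pos (inv_pos.mpr ht) (hw i)
  · simp only [Finset.smul_sum, smul_smul, ← mul_assoc, mul_inv_cancel₀ ht.ne', one_mul]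

theorem add_lt_card_of_sum_smul_mem (hbL : ∀ i, b i ∈ L) {k : ℕ}
    (hint : ∀ x ∈ interior ((k : ℝ) • convexHull ℝ (range b)), x ∉ L)
    {r : ι → ℝ} (hr1 : ∀ i, r i < 1) {s : ℕ} (hs : ∑ i, r i = s)
    (hrL : ∑ i, r i • b i ∈ L) : s + k < Fintype.card ι := by
  classical
  by_contra! hcard
  obtain ⟨i₀⟩ := b.nonempty
  obtain ⟨d, hd⟩ := Nat.exists_eq_add_of_le hcard
  have hdR : (s : ℝ) + k = Fintype.card ι + d := by exact_mod_cast hd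
  set w : ι → ℝ := fun i => 1 - r i + if i = i₀ then (d : ℝ) else 0
  have hw : ∀ i, 0 < w i := fun i => by
    have : (0 : ℝ) ≤ if i = i₀ then (d : ℝ) else 0 := by split_ifs <;> positivity
    linarith [hr1 i]
  have hwk : ∑ i, w i = k := by
    simp only [w, Finset.sum_add_distrib, Finset.sum_sub_distrib, Finset.sum_ite_eq',
      Finset.mem_univ, if_true, hs, Finset.sum_const, Finset.card_univ, nsmul_eq_mul,
      mul_one]
    linarith
  have hwL : ∑ i, w i • b i ∈ L := by
    have : ∑ i, w i • b i = ∑ i, b i - ∑ i, r i • b i + (d : ℝ) • b i₀ := by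
      simp only [w, add_smul, sub_smul, one_smul, ite_smul, zero_smul, Finset.sum_add_distrib,
        Finset.sum_sub_distrib, Finset.sum_ite_eq', Finset.mem_univ, if_true]
    rw [this, Nat.cast_smul_eq_nsmul]
    exact L.add_mem (L.sub_mem (L.sum_mem fun i _ => hbL i) hrL) (L.nsmul_mem (hbL i₀) d)
  exact hint _ (hwk ▸ b.sum_smul_mem_interior_smul_convexHull hw) hwL

theorem exists_fin_sum_eq_of_forall_interior_not_mem (hbL : ∀ i, b i ∈ L) {k c : ℕ}
    (hcard : Fintype.card ι ≤ c + k + 1)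
    (hint : ∀ x ∈ interior ((k : ℝ) • convexHull ℝ (range b)), x ∉ L) (m : ℕ) {x : V}
    (hx : x ∈ (((m + 1) * c : ℕ) : ℝ) • convexHull ℝ (range b)) (hxL : x ∈ L) :
    ∃ f : Fin (m + 1) → V,
      (∀ j, f j ∈ (c : ℝ) • convexHull ℝ (range b) ∧ f j ∈ L) ∧ x = ∑ j, f j := by
  have : Nonempty ι := b.nonempty
  obtain ⟨w, hw0, hwsum, rfl⟩ :=
    b.exists_nonneg_weights_of_mem_smul_convexHull (Nat.cast_nonneg _) hx
  set W : ι → ℕ := fun i => ⌊w i⌋₊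
  set r : ι → ℝ := fun i => w i - W i
  have hr0 : ∀ i, 0 ≤ r i := fun i => sub_nonneg.2 (Nat.floor_le (hw0 i))
  have hr1 : ∀ i, r i < 1 := fun i => by linarith [Nat.lt_floor_add_one (w i)]
  have hWle : ∑ i, W i ≤ (m + 1) * c := by
    have : ∑ i, (W i : ℝ) ≤ ∑ i, w i := Finset.sum_le_sum fun i _ => Nat.floor_le (hw0 i)
    exact_mod_cast hwsum ▸ this
  obtain ⟨s, hsW⟩ : ∃ s, s + ∑ i, W i = (m + 1) * c := ⟨_, Nat.sub_add_cancel hWle⟩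
  have hs : ∑ i, r i = s := by
    have hsW' : (s : ℝ) + ∑ i, (W i : ℝ) = (m + 1) * c := by exact_mod_cast hsW
    simp only [r, Finset.sum_sub_distrib, hwsum]
    push_cast
    linarith
  have hsplit : ∑ i, w i • b i = ∑ i, r i • b i + ∑ i, (W i : ℝ) • b i := by
    simp only [r, sub_smul, Finset.sum_sub_distrib, sub_add_cancel]
  have hrL : ∑ i, r i • b i ∈ L := by
    rw [eq_sub_of_add_eq hsplit.symm]
    exact L.sub_mem hxL (L.sum_natCast_smul_mem hbL W)
  have hsk := b.add_lt_card_of_sum_smul_mem L hbL hint hr1 hs hrL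
  have hrconv := (convex_convexHull ℝ (range b)).sum_smul_mem_sum_smul
    (range_nonempty b).convexHull Finset.univ (fun i _ => hr0 i)
    (fun i _ => subset_convexHull ℝ _ (mem_range_self i))
  rw [hs] at hrconv
  obtain ⟨f, hf, hfsum⟩ :=
    exists_fin_sum_eq_add_sum_natCast_smul L hbL (by omega) hrconv hrL m W hsW
  exact ⟨f, hf, hsplit.trans hfsum⟩

end AffineBasis

end Simplex

theorem dilate_n_sub_k_is_normal_general
    (n : ℕ)
    (S : Finset (Fin n → ℝ))
    (hSlat : (S : Set (Fin n → ℝ)) ⊆ latticePts n)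
    (P : Set (Fin n → ℝ)) (hP : P = convexHull ℝ (S : Set (Fin n → ℝ)))
    (hPfull : (interior P).Nonempty)
    (k : ℕ)
    (hk : ∀ x ∈ interior ((k : ℝ) • P), x ∉ latticePts n) :
    ∀ m : ℕ, 1 ≤ m →
      ∀ x ∈ ((m : ℝ) • ((((n - k : ℕ)) : ℝ) • P)) ∩ latticePts n,
        ∃ f : Fin m → (Fin n → ℝ),
          (∀ i, f i ∈ ((((n - k : ℕ)) : ℝ) • P) ∩ latticePts n) ∧ x = ∑ i, f i := by
  rintro _ hm x ⟨hx, hxL⟩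
  obtain ⟨m, rfl⟩ := Nat.exists_eq_add_one.mpr hm
  rw [smul_smul, ← Nat.cast_mul] at hx
  obtain ⟨y, hyP, rfl⟩ := hx
  subst hP
  have hspan := interior_convexHull_nonempty_iff_affineSpan_eq_top.mp hPfull
  obtain ⟨t, htS, ht, htop, hyt⟩ :=
    exists_affineIndependent_affineSpan_eq_top_mem_convexHull hspan hyP
  have : Fintype t := (S.finite_toSet.subset htS).fintype
  let b : AffineBasis t ℝ (Fin n → ℝ) := ⟨(↑), ht, by rwa [Subtype.range_coe]⟩
  have hb : range b = t := Subtype.range_coe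
  have hbP : convexHull ℝ (range b) ⊆ convexHull ℝ S := convexHull_mono (hb.trans_subset htS)
  obtain ⟨f, hf, hfsum⟩ := b.exists_fin_sum_eq_of_forall_interior_not_mem (latticeAddSubgroup n)
    (fun i => hSlat (htS i.2)) (k := k) (c := n - k)
    (by rw [b.card_eq_finrank_add_one, Module.finrank_fin_fun]; omega)
    (fun z hz => hk z (interior_mono (smul_set_mono hbP) hz)) m
    (smul_mem_smul_set (by rwa [hb])) hxL
  exact ⟨f, fun j => ⟨smul_set_mono hbP (hf j).1, (hf j).2⟩, hfsum⟩

/-- If `P ⊆ ℝ^n` (`n ≥ 2`) is a full-dimensional lattice polytope and `1 ≤ k ≤ n - 1` is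
such that `kP` contains no lattice point in its interior, then `(n - k)P` is normal. -/
theorem dilate_n_sub_k_is_normal
    (n : ℕ) (hn : 2 ≤ n)
    (S : Finset (Fin n → ℝ)) (hS : S.Nonempty)
    (hSlat : (S : Set (Fin n → ℝ)) ⊆ latticePts n)
    (P : Set (Fin n → ℝ)) (hP : P = convexHull ℝ (S : Set (Fin n → ℝ)))
    (hPfull : (interior P).Nonempty)
    (k : ℕ) (hk1 : 1 ≤ k) (hkn : k ≤ n - 1)
    (hk : ∀ x ∈ interior ((k : ℝ) • P), x ∉ latticePts n) :
    ∀ m : ℕ, 1 ≤ m →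
      ∀ x ∈ ((m : ℝ) • ((((n - k : ℕ)) : ℝ) • P)) ∩ latticePts n,
        ∃ f : Fin m → (Fin n → ℝ),
          (∀ i, f i ∈ ((((n - k : ℕ)) : ℝ) • P) ∩ latticePts n) ∧ x = ∑ i, f i :=
  dilate_n_sub_k_is_normal_general n S hSlat P hP hPfull k hk
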